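/- arXiv:2404.02413 — 2 statements merged into one kernel-verified Lean document; each statement's English description precedes it below -/
import Mathlib

section
/- For every integer n ≥ 0, every integer r ≥ 0 and every real x, φ_{n+1,r}^{Y}(x) = x · Σ_{k=0}^{n} binom(n,k) E[Y^{k+1}] φ_{n−k,r}^{Y}(x) + r · φ_{n,r}^{Y}(x). -/
open MeasureTheory ProbabilityTheory Finset

/-- The probabilistic `r`-Stirling numbers of the second kind associated with a random
variable (with iid copies `Ys`):
`{n+r \brace k+r}_{r,Y} = (1/k!) Σ_{j=0}^k binom(k,j) (-1)^(k-j) E[(S_j + r)^n]`,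
where `S_j = Y_1 + ⋯ + Y_j`. -/
noncomputable def probStirling {Ω : Type*} [MeasurableSpace Ω] (μ : Measure Ω)
    (Ys : ℕ → Ω → ℝ) (r n k : ℕ) : ℝ :=
  (1 / (Nat.factorial k : ℝ)) * ∑ j ∈ Finset.range (k + 1),
    (k.choose j : ℝ) * (-1) ^ (k - j) *
      ∫ ω, ((∑ i ∈ Finset.range j, Ys i ω) + (r : ℝ)) ^ n ∂μ

/-- The probabilistic `r`-Bell polynomials associated with a random variable:
`φ_{n,r}^Y(x) = Σ_{k=0}^n {n+r \brace k+r}_{r,Y} x^k`. -/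
noncomputable def probBell {Ω : Type*} [MeasurableSpace Ω] (μ : Measure Ω)
    (Ys : ℕ → Ω → ℝ) (r n : ℕ) (x : ℝ) : ℝ :=
  ∑ k ∈ Finset.range (n + 1), probStirling μ Ys r n k * x ^ k

/-!
Write `M j p = E[(S_j + r)^p]`, so that `{n+r \brace k+r}_{r,Y} = Δ^k M(·, n)(0) / k!`.
Splitting off one summand and using independence, `M (j+1) n - M j n` is a combination of the
`M j p` with `p < n`; hence `Δ^{n+1} M(·, n) = 0`, i.e. the Stirling numbers vanish for `k > n`.
By exchangeability, `E[S_j (S_j + r)^n] = j E[Y_1 (Y_1 + S_{j-1} + r)^n]`, which gives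
`M j (n+1) = r M j n + j Σ_l binom(n,l) E[Y^{l+1}] M (j-1) (n-l)`. Applying `Δ^{k+1}` at `0`,
where `Δ^{k+1}[j f(j-1)](0) = (k+1) Δ^k f(0)`, yields a triangular recurrence for the Stirling
numbers, and summing it against `x^{k+1}` gives the recurrence for the Bell polynomials.
-/

open scoped fwdDiff

section FiniteDifferences

lemma fwdDiff_iter_eq_zero_of_le {M G : Type*} [AddCommMonoid M] [AddCommGroup G] {h : M}
    {f : M → G} {a b : ℕ} (hf : Δ_[h] ^[a] f = 0) (hab : a ≤ b) : Δ_[h] ^[b] f = 0 := by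
  obtain ⟨c, rfl⟩ := Nat.exists_eq_add_of_le hab
  rw [add_comm, Function.iterate_add_apply, hf]
  exact Function.iterate_fixed (fwdDiff_const h 0) c

variable {R : Type*} [CommRing R]

lemma fwdDiff_iter_eq_sum_choose (f : ℕ → R) (k : ℕ) :
    Δ_[1] ^[k] f 0 = ∑ j ∈ range (k + 1), (k.choose j : R) * (-1) ^ (k - j) * f j := by
  rw [fwdDiff_iter_eq_sum_shift]
  refine sum_congr rfl fun j _ => ?_
  simp only [zero_add, smul_eq_mul, mul_one, zsmul_eq_mul]
  push_cast
  ring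

lemma fwdDiff_iter_succ_mul_pred (f : ℕ → R) (k : ℕ) :
    Δ_[1] ^[k + 1] (fun j : ℕ => (j : R) * f (j - 1)) 0 = (k + 1) * Δ_[1] ^[k] f 0 := by
  rw [fwdDiff_iter_eq_sum_choose, fwdDiff_iter_eq_sum_choose, sum_range_succ', mul_sum]
  simp only [Nat.cast_zero, mul_zero, zero_mul, add_zero, Nat.add_sub_cancel,
    Nat.add_sub_add_right]
  refine sum_congr rfl fun j _ => ?_
  have hchoose := congrArg (Nat.cast : ℕ → R) (Nat.add_one_mul_choose_eq k j)
  push_cast at hchoose ⊢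
  linear_combination (-1) ^ (k - j) * f j * hchoose.symm

lemma fwdDiff_iter_sum_mul {M ι : Type*} [AddCommMonoid M] (h : M) (s : Finset ι) (c : ι → R)
    (f : ι → M → R) (k : ℕ) :
    Δ_[h] ^[k] (fun j => ∑ l ∈ s, c l * f l j) = fun j => ∑ l ∈ s, c l * Δ_[h] ^[k] (f l) j := by
  have hsmul : (fun j => ∑ l ∈ s, c l * f l j) = ∑ l ∈ s, c l • f l := by
    ext j
    simp [Finset.sum_apply]
  rw [hsmul, fwdDiff_iter_finsetSum]
  ext j
  simp [Finset.sum_apply]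

end FiniteDifferences

lemma pow_mul_add_pow_eq_sum {R : Type*} [CommSemiring R] (x y : R) (q p : ℕ) :
    x ^ q * (x + y) ^ p = ∑ k ∈ range (p + 1), (p.choose k : R) * (x ^ (k + q) * y ^ (p - k)) := by
  rw [add_pow, mul_sum]
  exact sum_congr rfl fun k _ => by ring

lemma pow_mul_pow_sum_insert_add {Ω : Type*} {Ys : ℕ → Ω → ℝ} {a : ℕ} {s : Finset ℕ}
    (ha : a ∉ s) (c : ℝ) (q p : ℕ) :
    (fun ω => Ys a ω ^ q * ((∑ i ∈ insert a s, Ys i ω) + c) ^ p) = fun ω =>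
      ∑ k ∈ range (p + 1), (p.choose k : ℝ) *
        (Ys a ω ^ (k + q) * ((∑ i ∈ s, Ys i ω) + c) ^ (p - k)) := by
  ext ω
  rw [sum_insert ha, add_assoc, pow_mul_add_pow_eq_sum]

section IndependentSums

variable {Ω : Type*} [MeasurableSpace Ω] {μ : Measure Ω} {Ys : ℕ → Ω → ℝ}
  {m : ℕ → ℝ} {a : ℕ} {s : Finset ℕ}

lemma indepFun_pow_pow_sum_add (hindep : iIndepFun Ys μ)
    (hint : ∀ i k, Integrable (fun ω => Ys i ω ^ k) μ) (ha : a ∉ s) (c : ℝ) (k q : ℕ) :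
    IndepFun (fun ω => Ys a ω ^ k) (fun ω => ((∑ i ∈ s, Ys i ω) + c) ^ q) μ := by
  have hmeas i : AEMeasurable (Ys i) μ := by simpa using (hint i 1).aemeasurable
  simpa only [Function.comp_def, id, Finset.sum_apply] using
    (hindep.indepFun_finsetSum_of_notMem₀ hmeas ha).symm.comp
      (measurable_id.pow_const k) ((measurable_id.add_const c).pow_const q)

variable [IsProbabilityMeasure μ]

lemma integrable_pow_sum_add (hindep : iIndepFun Ys μ)
    (hint : ∀ i k, Integrable (fun ω => Ys i ω ^ k) μ) (s : Finset ℕ) (c : ℝ) (p : ℕ) :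
    Integrable (fun ω => ((∑ i ∈ s, Ys i ω) + c) ^ p) μ := by
  induction s using Finset.induction_on generalizing p with
  | empty => simp
  | insert a s ha ih =>
    have h := pow_mul_pow_sum_insert_add (Ys := Ys) ha c 0 p
    simp only [pow_zero, one_mul, add_zero] at h
    rw [h]
    exact integrable_finsetSum _ fun k _ =>
      ((indepFun_pow_pow_sum_add hindep hint ha c k (p - k)).integrable_mul
        (hint a k) (ih _)).const_mul _

lemma integrable_pow_mul_pow_sum_add (hindep : iIndepFun Ys μ)
    (hint : ∀ i k, Integrable (fun ω => Ys i ω ^ k) μ) (ha : a ∉ s) (c : ℝ) (k q : ℕ) :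
    Integrable (fun ω => Ys a ω ^ k * ((∑ i ∈ s, Ys i ω) + c) ^ q) μ :=
  (indepFun_pow_pow_sum_add hindep hint ha c k q)
    |>.integrable_mul (hint a k) (integrable_pow_sum_add hindep hint s c q)

lemma integrable_pow_mul_pow_sum_insert_add (hindep : iIndepFun Ys μ)
    (hint : ∀ i k, Integrable (fun ω => Ys i ω ^ k) μ) (ha : a ∉ s) (c : ℝ) (q p : ℕ) :
    Integrable (fun ω => Ys a ω ^ q * ((∑ i ∈ insert a s, Ys i ω) + c) ^ p) μ := by
  rw [pow_mul_pow_sum_insert_add ha]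
  exact integrable_finsetSum _ fun k _ =>
    (integrable_pow_mul_pow_sum_add hindep hint ha c _ _).const_mul _

lemma integral_pow_mul_pow_sum_insert_add (hindep : iIndepFun Ys μ)
    (hint : ∀ i k, Integrable (fun ω => Ys i ω ^ k) μ) (hm : ∀ i k, ∫ ω, Ys i ω ^ k ∂μ = m k)
    (ha : a ∉ s) (c : ℝ) (q p : ℕ) :
    ∫ ω, Ys a ω ^ q * ((∑ i ∈ insert a s, Ys i ω) + c) ^ p ∂μ =
      ∑ k ∈ range (p + 1), (p.choose k : ℝ) * m (k + q) *
        ∫ ω, ((∑ i ∈ s, Ys i ω) + c) ^ (p - k) ∂μ := by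
  rw [pow_mul_pow_sum_insert_add ha, integral_finsetSum _ fun k _ =>
    (integrable_pow_mul_pow_sum_add hindep hint ha c _ _).const_mul _]
  refine sum_congr rfl fun k _ => ?_
  rw [integral_const_mul, (indepFun_pow_pow_sum_add hindep hint ha c (k + q) (p - k))
    |>.integral_fun_mul_eq_mul_integral (hint a _).aestronglyMeasurable
      (integrable_pow_sum_add hindep hint s c _).aestronglyMeasurable, hm, mul_assoc]

lemma integral_pow_sum_insert_add (hindep : iIndepFun Ys μ)
    (hint : ∀ i k, Integrable (fun ω => Ys i ω ^ k) μ) (hm : ∀ i k, ∫ ω, Ys i ω ^ k ∂μ = m k)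
    (ha : a ∉ s) (c : ℝ) (p : ℕ) :
    ∫ ω, ((∑ i ∈ insert a s, Ys i ω) + c) ^ p ∂μ =
      ∑ k ∈ range (p + 1), (p.choose k : ℝ) * m k *
        ∫ ω, ((∑ i ∈ s, Ys i ω) + c) ^ (p - k) ∂μ := by
  simpa using integral_pow_mul_pow_sum_insert_add hindep hint hm ha c 0 p

lemma integral_pow_sum_add_eq_of_card_eq (hindep : iIndepFun Ys μ)
    (hint : ∀ i k, Integrable (fun ω => Ys i ω ^ k) μ) (hm : ∀ i k, ∫ ω, Ys i ω ^ k ∂μ = m k)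
    {s t : Finset ℕ} (hst : s.card = t.card) (c : ℝ) (p : ℕ) :
    ∫ ω, ((∑ i ∈ s, Ys i ω) + c) ^ p ∂μ = ∫ ω, ((∑ i ∈ t, Ys i ω) + c) ^ p ∂μ := by
  induction s using Finset.induction_on generalizing t p with
  | empty => rw [card_eq_zero.1 hst.symm]
  | insert a s ha ih =>
    obtain ⟨b, t, hb, rfl, hcard⟩ := card_eq_succ.1 (hst.symm.trans (card_insert_of_notMem ha))
    rw [integral_pow_sum_insert_add hindep hint hm ha,
      integral_pow_sum_insert_add hindep hint hm hb]
    exact sum_congr rfl fun k _ => by rw [ih hcard.symm]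

lemma integrable_mul_pow_sum_add_of_mem (hindep : iIndepFun Ys μ)
    (hint : ∀ i k, Integrable (fun ω => Ys i ω ^ k) μ) (ha : a ∈ s) (c : ℝ) (n : ℕ) :
    Integrable (fun ω => Ys a ω * ((∑ i ∈ s, Ys i ω) + c) ^ n) μ := by
  simpa [insert_erase ha] using
    integrable_pow_mul_pow_sum_insert_add hindep hint (notMem_erase a s) c 1 n

lemma integral_mul_pow_sum_add_of_mem (hindep : iIndepFun Ys μ)
    (hint : ∀ i k, Integrable (fun ω => Ys i ω ^ k) μ) (hm : ∀ i k, ∫ ω, Ys i ω ^ k ∂μ = m k)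
    (ha : a ∈ s) (c : ℝ) (n : ℕ) :
    ∫ ω, Ys a ω * ((∑ i ∈ s, Ys i ω) + c) ^ n ∂μ =
      ∑ l ∈ range (n + 1), (n.choose l : ℝ) * m (l + 1) *
        ∫ ω, ((∑ i ∈ s.erase a, Ys i ω) + c) ^ (n - l) ∂μ := by
  simpa [insert_erase ha] using
    integral_pow_mul_pow_sum_insert_add hindep hint hm (notMem_erase a s) c 1 n

end IndependentSums

section ShiftedSumMoment

variable {Ω : Type*} [MeasurableSpace Ω]

noncomputable def shiftedSumMoment (μ : Measure Ω) (Ys : ℕ → Ω → ℝ) (c : ℝ) (j p : ℕ) : ℝ :=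
  ∫ ω, ((∑ i ∈ range j, Ys i ω) + c) ^ p ∂μ

variable {μ : Measure Ω} [IsProbabilityMeasure μ] {Ys : ℕ → Ω → ℝ} {m : ℕ → ℝ}

lemma fwdDiff_shiftedSumMoment (hindep : iIndepFun Ys μ)
    (hint : ∀ i k, Integrable (fun ω => Ys i ω ^ k) μ) (hm : ∀ i k, ∫ ω, Ys i ω ^ k ∂μ = m k)
    (c : ℝ) (n : ℕ) :
    Δ_[1] (fun j => shiftedSumMoment μ Ys c j n) = fun j =>
      ∑ k ∈ range n, (n.choose (k + 1) : ℝ) * m (k + 1) *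
        shiftedSumMoment μ Ys c j (n - (k + 1)) := by
  ext j
  have hm0 : m 0 = 1 := by simpa using (hm 0 0).symm
  simp only [fwdDiff, shiftedSumMoment]
  rw [range_add_one, integral_pow_sum_insert_add hindep hint hm notMem_range_self, sum_range_succ']
  simp [hm0]

lemma fwdDiff_iter_shiftedSumMoment_eq_zero (hindep : iIndepFun Ys μ)
    (hint : ∀ i k, Integrable (fun ω => Ys i ω ^ k) μ) (hm : ∀ i k, ∫ ω, Ys i ω ^ k ∂μ = m k)
    (c : ℝ) (n : ℕ) :
    Δ_[1] ^[n + 1] (fun j => shiftedSumMoment μ Ys c j n) = 0 := by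
  induction n using Nat.strong_induction_on with
  | _ n ih =>
    rw [Function.iterate_succ_apply, fwdDiff_shiftedSumMoment hindep hint hm, fwdDiff_iter_sum_mul]
    ext j
    refine sum_eq_zero fun k hk => ?_
    have hk : k < n := mem_range.1 hk
    rw [fwdDiff_iter_eq_zero_of_le (ih _ (by omega)) (by omega), Pi.zero_apply, mul_zero]

lemma shiftedSumMoment_pow_succ (hindep : iIndepFun Ys μ)
    (hint : ∀ i k, Integrable (fun ω => Ys i ω ^ k) μ) (hm : ∀ i k, ∫ ω, Ys i ω ^ k ∂μ = m k)
    (c : ℝ) (j n : ℕ) :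
    shiftedSumMoment μ Ys c j (n + 1) = c * shiftedSumMoment μ Ys c j n +
      j * ∑ l ∈ range (n + 1), (n.choose l : ℝ) * m (l + 1) *
        shiftedSumMoment μ Ys c (j - 1) (n - l) := by
  have hsplit : ∀ ω, ((∑ i ∈ range j, Ys i ω) + c) ^ (n + 1) =
      c * ((∑ i ∈ range j, Ys i ω) + c) ^ n +
        ∑ i ∈ range j, Ys i ω * ((∑ i ∈ range j, Ys i ω) + c) ^ n := by
    intro ω
    rw [pow_succ, ← sum_mul]
    ring
  have hterm : ∀ i ∈ range j, ∫ ω, Ys i ω * ((∑ i ∈ range j, Ys i ω) + c) ^ n ∂μ =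
      ∑ l ∈ range (n + 1), (n.choose l : ℝ) * m (l + 1) *
        shiftedSumMoment μ Ys c (j - 1) (n - l) := by
    intro i hi
    rw [integral_mul_pow_sum_add_of_mem hindep hint hm hi]
    refine sum_congr rfl fun l _ => ?_
    rw [shiftedSumMoment, integral_pow_sum_add_eq_of_card_eq hindep hint hm (t := range (j - 1))
      (by simp [card_erase_of_mem hi])]
  rw [shiftedSumMoment, integral_congr_ae (ae_of_all _ hsplit),
    integral_add ((integrable_pow_sum_add hindep hint _ c n).const_mul c)
      (integrable_finsetSum _ fun i hi => integrable_mul_pow_sum_add_of_mem hindep hint hi c n),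
    integral_const_mul, integral_finsetSum _ fun i hi =>
      integrable_mul_pow_sum_add_of_mem hindep hint hi c n,
    sum_congr rfl hterm, sum_const, card_range, nsmul_eq_mul, shiftedSumMoment]

end ShiftedSumMoment

section ProbStirling

variable {Ω : Type*} [MeasurableSpace Ω] {μ : Measure Ω} {Ys : ℕ → Ω → ℝ}

lemma probStirling_eq_fwdDiff_iter (r n k : ℕ) :
    probStirling μ Ys r n k =
      Δ_[1] ^[k] (fun j => shiftedSumMoment μ Ys r j n) 0 / k.factorial := by
  rw [probStirling, fwdDiff_iter_eq_sum_choose, one_div_mul_eq_div]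
  rfl

variable [IsProbabilityMeasure μ]

lemma probStirling_zero_right (r n : ℕ) : probStirling μ Ys r n 0 = (r : ℝ) ^ n := by
  simp [probStirling]

variable {m : ℕ → ℝ}

lemma probStirling_eq_zero_of_lt (hindep : iIndepFun Ys μ)
    (hint : ∀ i k, Integrable (fun ω => Ys i ω ^ k) μ) (hm : ∀ i k, ∫ ω, Ys i ω ^ k ∂μ = m k)
    (r : ℕ) {n k : ℕ} (h : n < k) : probStirling μ Ys r n k = 0 := by
  rw [probStirling_eq_fwdDiff_iter, fwdDiff_iter_eq_zero_of_le
    (fwdDiff_iter_shiftedSumMoment_eq_zero hindep hint hm _ n) h, Pi.zero_apply, zero_div]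

lemma probStirling_succ_succ (hindep : iIndepFun Ys μ)
    (hint : ∀ i k, Integrable (fun ω => Ys i ω ^ k) μ) (hm : ∀ i k, ∫ ω, Ys i ω ^ k ∂μ = m k)
    (r n k : ℕ) :
    probStirling μ Ys r (n + 1) (k + 1) = r * probStirling μ Ys r n (k + 1) +
      ∑ l ∈ range (n + 1), (n.choose l : ℝ) * m (l + 1) * probStirling μ Ys r (n - l) k := by
  have hsplit : (fun j => shiftedSumMoment μ Ys r j (n + 1)) =
      (r : ℝ) • (fun j => shiftedSumMoment μ Ys r j n) + fun j : ℕ => (j : ℝ) *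
        ∑ l ∈ range (n + 1), (n.choose l : ℝ) * m (l + 1) *
          shiftedSumMoment μ Ys r (j - 1) (n - l) := by
    ext j
    simp [shiftedSumMoment_pow_succ hindep hint hm]
  simp only [probStirling_eq_fwdDiff_iter]
  rw [hsplit, fwdDiff_iter_add, Pi.add_apply, fwdDiff_iter_const_smul, Pi.smul_apply,
    fwdDiff_iter_succ_mul_pred
      (fun j => ∑ l ∈ range (n + 1), (n.choose l : ℝ) * m (l + 1) *
        shiftedSumMoment μ Ys r j (n - l)),
    fwdDiff_iter_sum_mul, Nat.factorial_succ]
  simp only [smul_eq_mul, ← mul_div_assoc, ← sum_div, Nat.cast_mul]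
  field_simp
  push_cast
  ring

end ProbStirling

section ProbBell

variable {Ω : Type*} [MeasurableSpace Ω] {μ : Measure Ω} [IsProbabilityMeasure μ]
  {Ys : ℕ → Ω → ℝ} {m : ℕ → ℝ}

lemma probBell_eq_sum_range_of_le (hindep : iIndepFun Ys μ)
    (hint : ∀ i k, Integrable (fun ω => Ys i ω ^ k) μ) (hm : ∀ i k, ∫ ω, Ys i ω ^ k ∂μ = m k)
    (r : ℕ) {n N : ℕ} (h : n ≤ N) (x : ℝ) :
    probBell μ Ys r n x = ∑ k ∈ range (N + 1), probStirling μ Ys r n k * x ^ k := by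
  refine sum_subset (range_subset_range.2 (by omega)) fun k _ hk => ?_
  rw [probStirling_eq_zero_of_lt hindep hint hm r (by simpa using hk), zero_mul]

lemma probBell_succ (hindep : iIndepFun Ys μ)
    (hint : ∀ i k, Integrable (fun ω => Ys i ω ^ k) μ) (hm : ∀ i k, ∫ ω, Ys i ω ^ k ∂μ = m k)
    (n r : ℕ) (x : ℝ) :
    probBell μ Ys r (n + 1) x =
      x * ∑ l ∈ range (n + 1), (n.choose l : ℝ) * m (l + 1) * probBell μ Ys r (n - l) x +
      r * probBell μ Ys r n x := by
  have hφ : ∀ l, probBell μ Ys r (n - l) x =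
      ∑ k ∈ range (n + 1), probStirling μ Ys r (n - l) k * x ^ k := fun l =>
    probBell_eq_sum_range_of_le hindep hint hm r (Nat.sub_le n l) x
  have hswap : x * ∑ l ∈ range (n + 1), (n.choose l : ℝ) * m (l + 1) *
      ∑ k ∈ range (n + 1), probStirling μ Ys r (n - l) k * x ^ k =
      ∑ k ∈ range (n + 1), (∑ l ∈ range (n + 1), (n.choose l : ℝ) * m (l + 1) *
        probStirling μ Ys r (n - l) k) * x ^ (k + 1) := by
    simp only [mul_sum, sum_mul]
    rw [sum_comm]
    exact sum_congr rfl fun _ _ => sum_congr rfl fun _ _ => by ring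
  rw [probBell, probBell_eq_sum_range_of_le hindep hint hm r n.le_succ, sum_range_succ' _ (n + 1),
    sum_range_succ' (fun k => probStirling μ Ys r n k * x ^ k) (n + 1)]
  simp only [hφ, hswap, probStirling_succ_succ hindep hint hm, probStirling_zero_right]
  simp only [add_mul, sum_add_distrib, mul_add, mul_sum, mul_assoc]
  ring

end ProbBell

theorem probBell_recurrence_general
    {Ω : Type*} [MeasurableSpace Ω] (μ : Measure Ω) [IsProbabilityMeasure μ]
    (Y : Ω → ℝ) (Ys : ℕ → Ω → ℝ)
    (hindep : iIndepFun Ys μ)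
    (hident : ∀ i, IdentDistrib (Ys i) Y μ μ)
    (ε : ℝ) (hε : 0 < ε)
    (hmgf : ∀ t : ℝ, |t| < ε → Integrable (fun ω => Real.exp (t * Y ω)) μ)
    (n r : ℕ) (x : ℝ) :
    probBell μ Ys r (n + 1) x =
      x * ∑ k ∈ Finset.range (n + 1),
        (n.choose k : ℝ) * (∫ ω, Y ω ^ (k + 1) ∂μ) * probBell μ Ys r (n - k) x +
      (r : ℝ) * probBell μ Ys r n x := by
  have hmom : ∀ k, Integrable (fun ω => Y ω ^ k) μ :=
    integrable_pow_of_integrable_exp_mul (half_pos hε).ne'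
      (hmgf _ (by rw [abs_of_pos (half_pos hε)]; linarith))
      (hmgf _ (by rw [abs_neg, abs_of_pos (half_pos hε)]; linarith))
  have hint : ∀ i k, Integrable (fun ω => Ys i ω ^ k) μ := fun i k =>
    ((hident i).comp (measurable_id.pow_const k)).symm.integrable_snd (hmom k)
  have hm : ∀ i k, ∫ ω, Ys i ω ^ k ∂μ = ∫ ω, Y ω ^ k ∂μ := fun i k =>
    ((hident i).comp (measurable_id.pow_const k)).integral_eq
  exact probBell_succ hindep hint hm n r x

/-- Recurrence for the probabilistic `r`-Bell polynomials:
`φ_{n+1,r}^Y(x) = x Σ_{k=0}^n binom(n,k) E[Y^{k+1}] φ_{n-k,r}^Y(x) + r φ_{n,r}^Y(x)`. -/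
theorem probBell_recurrence
    {Ω : Type*} [MeasurableSpace Ω] (μ : Measure Ω) [IsProbabilityMeasure μ]
    (Y : Ω → ℝ) (Ys : ℕ → Ω → ℝ)
    (hY : Measurable Y) (hYs : ∀ i, Measurable (Ys i))
    (hindep : iIndepFun Ys μ)
    (hident : ∀ i, IdentDistrib (Ys i) Y μ μ)
    (ε : ℝ) (hε : 0 < ε)
    (hmgf : ∀ t : ℝ, |t| < ε → Integrable (fun ω => Real.exp (t * Y ω)) μ)
    (n r : ℕ) (x : ℝ) :
    probBell μ Ys r (n + 1) x =
      x * ∑ k ∈ Finset.range (n + 1),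
        (n.choose k : ℝ) * (∫ ω, Y ω ^ (k + 1) ∂μ) * probBell μ Ys r (n - k) x +
      (r : ℝ) * probBell μ Ys r n x :=
  probBell_recurrence_general μ Y Ys hindep hident ε hε hmgf n r x
end

section
/- For all integers n, j ≥ 0, every integer r ≥ 0 and every real y, the r-Bell polynomials satisfy φ_{j+n,r}(y) = Σ_{l=0}^{n} Σ_{m=0}^{j} Σ_{k=0}^{l} binom(n,l) binom(j,m) r^{n−l} φ_{m,r}(y) y^k k^{j−m} S(l,k), where 0^0 is interpreted as 1. -/
/-!
Let `L` be the linear functional on polynomials sending `X ^ n` to the Bell (Touchard)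
polynomial `B_n(y) = Σ_k S(n,k) y^k`. Then `φ_{n,r}(y) = L((X + r)^n)`, and the Touchard
recurrence `B_{n+1} = y Σ_i C(n,i) B_i` says `L(X p(X)) = y L(p(X + 1))`. Iterating this along
the recurrence of `S` gives `L(X^l p(X)) = Σ_k S(l,k) y^k L(p(X + k))`. Now write
`(X + r)^(j+n) = Σ_l C(n,l) r^(n-l) X^l (X + r)^j`, apply the previous identity to
`p = (X + r)^j`, and expand `(X + k + r)^j = Σ_m C(j,m) k^(j-m) (X + r)^m`.
-/

/-- The Stirling numbers of the second kind `S(n,k)`, counting the number of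
partitions of an `n`-element set into `k` nonempty blocks, via the standard
recurrence `S(n+1,k+1) = (k+1) S(n,k+1) + S(n,k)`. -/
def stirling2 : ℕ → ℕ → ℕ
  | 0, 0 => 1
  | 0, _ + 1 => 0
  | _ + 1, 0 => 0
  | n + 1, k + 1 => (k + 1) * stirling2 n (k + 1) + stirling2 n k

/-- The `r`-Stirling numbers of the second kind
`{n+r \brace k+r}_r = Σ_{i=k}^n binom(n,i) S(i,k) r^(n-i)`. -/
def rStirling2 (r n k : ℕ) : ℕ :=
  ∑ i ∈ Finset.Icc k n, n.choose i * stirling2 i k * r ^ (n - i)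

/-- The `r`-Bell polynomials `φ_{n,r}(y) = Σ_{k=0}^n {n+r \brace k+r}_r y^k`. -/
noncomputable def rBellPoly (r n : ℕ) (y : ℝ) : ℝ :=
  ∑ k ∈ Finset.range (n + 1), (rStirling2 r n k : ℝ) * y ^ k

open Polynomial Finset

theorem stirling2_eq_stirlingSecond : ∀ n k, stirling2 n k = Nat.stirlingSecond n k
  | 0, 0 | 0, _ + 1 | _ + 1, 0 => rfl
  | n + 1, k + 1 => by
    rw [stirling2, Nat.stirlingSecond_succ_succ, stirling2_eq_stirlingSecond n,
      stirling2_eq_stirlingSecond n]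

namespace Nat

theorem stirlingSecond_succ_succ_eq_sum_choose (n k : ℕ) :
    stirlingSecond (n + 1) (k + 1) = ∑ s ∈ range (n + 1), n.choose s * stirlingSecond s k := by
  induction n generalizing k with
  | zero => cases k <;> rfl
  | succ n ih =>
    have pascal := sum_choose_succ_mul (R := ℕ) (fun s _ => stirlingSecond s k) n
    simp only [Nat.cast_id] at pascal
    rw [pascal, ← ih]
    cases k with
    | zero => simp [stirlingSecond_succ_succ]
    | succ k =>
      simp only [stirlingSecond_succ_succ, mul_add, sum_add_distrib, mul_left_comm _ (k + 1),
        ← mul_sum, ← ih]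
      ring

theorem sum_stirlingSecond_succ_mul {R : Type*} [Semiring R] (l : ℕ) (a : ℕ → R) :
    ∑ k ∈ range (l + 2), (stirlingSecond (l + 1) k : R) * a k =
      ∑ k ∈ range (l + 1), (stirlingSecond l k : R) * (k * a k + a (k + 1)) := by
  have shifted :
      ∑ k ∈ range (l + 1), (((k + 1) * stirlingSecond l (k + 1) : ℕ) : R) * a (k + 1) =
        ∑ k ∈ range (l + 1), (stirlingSecond l k : R) * (k * a k) :=
    calc _ = ∑ k ∈ range (l + 2), (stirlingSecond l k : R) * (k * a k) := by
          rw [sum_range_succ' _ (l + 1)]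
          simp only [Nat.cast_zero, zero_mul, mul_zero, add_zero]
          refine sum_congr rfl fun k _ => ?_
          rw [Nat.cast_mul, (Nat.cast_commute _ _).eq, mul_assoc]
      _ = _ := by simp [sum_range_succ _ (l + 1), stirlingSecond_eq_zero_of_lt]
  rw [sum_range_succ', stirlingSecond_succ_zero, Nat.cast_zero, zero_mul, add_zero]
  simp only [mul_add, sum_add_distrib]
  rw [← shifted, ← sum_add_distrib]
  refine sum_congr rfl fun k _ => ?_
  rw [stirlingSecond_succ_succ, Nat.cast_add, add_mul]

end Nat

section BellFunctional

variable {R : Type*} [CommSemiring R]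

noncomputable def bellPoly (n : ℕ) (y : R) : R :=
  ∑ k ∈ range (n + 1), (Nat.stirlingSecond n k : R) * y ^ k

theorem bellPoly_eq_sum_range {n N : ℕ} (h : n < N) (y : R) :
    bellPoly n y = ∑ k ∈ range N, (Nat.stirlingSecond n k : R) * y ^ k :=
  sum_subset (range_subset_range.2 h) fun k _ hk => by
    rw [Nat.stirlingSecond_eq_zero_of_lt (by simpa using hk), Nat.cast_zero, zero_mul]

theorem bellPoly_succ (n : ℕ) (y : R) :
    bellPoly (n + 1) y = y * ∑ i ∈ range (n + 1), (n.choose i : R) * bellPoly i y := by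
  rw [bellPoly, sum_range_succ', Nat.stirlingSecond_succ_zero, Nat.cast_zero, zero_mul, add_zero]
  simp_rw [Nat.stirlingSecond_succ_succ_eq_sum_choose, Nat.cast_sum, Nat.cast_mul, sum_mul,
    mul_sum]
  rw [sum_comm]
  refine sum_congr rfl fun i hi => ?_
  rw [bellPoly_eq_sum_range (mem_range.1 hi), mul_sum, mul_sum]
  exact sum_congr rfl fun k _ => by ring

theorem LinearMap.map_add_C_pow (L : R[X] →ₗ[R] R) (p : R[X]) (c : R) (N : ℕ) :
    L ((p + C c) ^ N) =
      ∑ i ∈ Finset.range (N + 1), (N.choose i : R) * c ^ (N - i) * L (p ^ i) := by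
  rw [add_pow, map_sum]
  refine sum_congr rfl fun i _ => ?_
  rw [← C_pow, ← map_natCast C, mul_assoc, ← C_mul, mul_comm, ← smul_eq_C_mul, map_smul,
    smul_eq_mul, mul_comm (c ^ _)]

noncomputable def bellFunctional (y : R) : R[X] →ₗ[R] R :=
  lsum fun n => LinearMap.mulRight R (bellPoly n y)

theorem bellFunctional_X_pow (y : R) (n : ℕ) : bellFunctional y (X ^ n) = bellPoly n y := by
  simp [bellFunctional, ← monomial_one_right_eq_X_pow, sum_monomial_index]

theorem bellFunctional_X_add_C_pow (y c : R) (N : ℕ) :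
    bellFunctional y ((X + C c) ^ N) =
      ∑ i ∈ range (N + 1), (N.choose i : R) * c ^ (N - i) * bellPoly i y := by
  simp only [LinearMap.map_add_C_pow, bellFunctional_X_pow]

theorem bellFunctional_X_mul (y : R) (p : R[X]) :
    bellFunctional y (X * p) = y * bellFunctional y (p.comp (X + C 1)) := by
  induction p using Polynomial.induction_on' with
  | add p q hp hq => simp only [mul_add, add_comp, map_add, hp, hq]
  | monomial n a =>
    rw [← C_mul_X_pow_eq_monomial, mul_left_comm, ← pow_succ', mul_comp, C_comp, X_pow_comp]
    simp only [← smul_eq_C_mul, map_smul, smul_eq_mul, bellFunctional_X_pow,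
      bellFunctional_X_add_C_pow, bellPoly_succ, one_pow, mul_one]
    ring

theorem bellFunctional_X_pow_mul (y : R) (l : ℕ) (p : R[X]) :
    bellFunctional y (X ^ l * p) = ∑ k ∈ range (l + 1),
      (Nat.stirlingSecond l k : R) * (y ^ k * bellFunctional y (p.comp (X + C (k : R)))) := by
  induction l generalizing p with
  | zero => simp
  | succ l ih =>
    rw [pow_succ, mul_assoc, ih, Nat.sum_stirlingSecond_succ_mul]
    refine sum_congr rfl fun k _ => ?_
    rw [mul_comp, X_comp, add_mul, map_add, bellFunctional_X_mul, comp_assoc, add_comp, X_comp,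
      C_comp, ← smul_eq_C_mul, map_smul, smul_eq_mul, add_assoc, ← C_add, add_comm (1 : R),
      ← Nat.cast_succ]
    ring

end BellFunctional

theorem rBellPoly_eq_bellFunctional (r N : ℕ) (y : ℝ) :
    rBellPoly r N y = bellFunctional y ((X + C (r : ℝ)) ^ N) := by
  rw [bellFunctional_X_add_C_pow, rBellPoly]
  simp_rw [rStirling2, stirling2_eq_stirlingSecond, Nat.cast_sum, Nat.cast_mul, Nat.cast_pow,
    sum_mul, bellPoly, mul_sum]
  rw [sum_comm' (t' := range (N + 1)) (s' := fun i => range (i + 1))]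
  · exact sum_congr rfl fun i _ => sum_congr rfl fun k _ => by ring
  · intro k i
    simp only [mem_range, mem_Icc]
    omega

/-- Spivey-type recurrence for the `r`-Bell polynomials. -/
theorem spivey_recurrence_rBellPoly (n j r : ℕ) (y : ℝ) :
    rBellPoly r (j + n) y =
      ∑ l ∈ Finset.range (n + 1), ∑ m ∈ Finset.range (j + 1),
        ∑ k ∈ Finset.range (l + 1),
          (n.choose l : ℝ) * (j.choose m : ℝ) * (r : ℝ) ^ (n - l) *
            rBellPoly r m y * y ^ k * (k : ℝ) ^ (j - m) * (stirling2 l k : ℝ) := by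
  have shift (k : ℕ) : bellFunctional y (((X + C (r : ℝ)) ^ j).comp (X + C (k : ℝ))) =
      ∑ m ∈ range (j + 1), (j.choose m : ℝ) * (k : ℝ) ^ (j - m) * rBellPoly r m y := by
    rw [pow_comp, add_comp, X_comp, C_comp, add_right_comm, LinearMap.map_add_C_pow]
    simp_rw [rBellPoly_eq_bellFunctional]
  have expand :=
    (bellFunctional y ∘ₗ LinearMap.mulRight ℝ ((X + C (r : ℝ)) ^ j)).map_add_C_pow X r n
  simp only [LinearMap.comp_apply, LinearMap.mulRight_apply, ← pow_add] at expand
  rw [rBellPoly_eq_bellFunctional, add_comm j n, expand]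
  simp_rw [bellFunctional_X_pow_mul, shift, stirling2_eq_stirlingSecond, mul_sum]
  refine sum_congr rfl fun l _ => ?_
  rw [sum_comm]
  exact sum_congr rfl fun m _ => sum_congr rfl fun k _ => by ring
end
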